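/- arXiv:1007.0867 — 5 statements merged into one kernel-verified Lean document; each statement's English description precedes it below -/
import Mathlib

section
/- The function σ : ℍ × ℍ → ℝ defined by σ(q,p) = |q - p| if p and q lie on the same complex slice ℝ + Iℝ for some imaginary unit I, and σ(q,p) = √((Re q - Re p)² + (|Im q| + |Im p|)²) otherwise, is a metric on the quaternions ℍ. -/
open Quaternion

/-- Two quaternions lie on the same complex slice `ℝ + Iℝ` for some imaginary unit `I`. -/
def sameSlice (p q : ℍ[ℝ]) : Prop :=
  ∃ I : ℍ[ℝ], I ^ 2 = -1 ∧ (∃ x y : ℝ, p = (x : ℍ[ℝ]) + y • I) ∧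
    (∃ x y : ℝ, q = (x : ℍ[ℝ]) + y • I)

open Classical in
/-- The slice distance σ. -/
noncomputable def sliceSigma (q p : ℍ[ℝ]) : ℝ :=
  if sameSlice p q then ‖q - p‖
  else Real.sqrt ((q.re - p.re) ^ 2 + (‖q.im‖ + ‖p.im‖) ^ 2)

/-!
Send `q` to `ψ q = Re q + i |Im q|` in the closed upper half plane of `ℂ`. Off a common slice,
`σ(q, p) = |ψ q - conj (ψ p)|` is the distance from `ψ q` to the mirror image of `ψ p`, and in
general `|ψ q - ψ p| ≤ |q - p| ≤ σ(q, p) ≤ |ψ q - conj (ψ p)|`. The triangle inequality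
`σ(q, r) ≤ σ(q, p) + σ(p, r)` then follows from the one in `ℂ`, going through `conj (ψ p)`,
whenever `p` is real or off the slice of `q` (or, symmetrically, of `r`). In the remaining case
`p` is non-real and lies on a slice with both `q` and `r`; that slice is then `ℝ + ℝ Im p`, so `q`
and `r` share it and `σ` is the Euclidean distance on all three pairs.
-/

namespace Quaternion

lemma sq_norm_eq_sq_re_add_sq_norm_im (a : ℍ[ℝ]) : ‖a‖ ^ 2 = a.re ^ 2 + ‖a.im‖ ^ 2 := by
  simp only [sq, ← normSq_eq_norm_mul_self, normSq_def', re_im, imI_im, imJ_im, imK_im]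
  ring

lemma norm_eq_sqrt_sq_re_add_sq_norm_im (a : ℍ[ℝ]) : ‖a‖ = √(a.re ^ 2 + ‖a.im‖ ^ 2) := by
  rw [← sq_norm_eq_sq_re_add_sq_norm_im, Real.sqrt_sq (norm_nonneg a)]

lemma exists_coe_add_smul_iff (I q : ℍ[ℝ]) :
    (∃ x y : ℝ, q = (x : ℍ[ℝ]) + y • I) ↔ ∃ y : ℝ, q.im = y • I.im := by
  constructor
  · rintro ⟨x, y, rfl⟩
    exact ⟨y, by simp⟩
  · rintro ⟨y, hy⟩
    refine ⟨q.re - y * I.re, y, ?_⟩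
    conv_lhs => rw [← re_add_im q, hy, ← sub_re_self I]
    simp only [smul_sub, coe_sub, ← smul_eq_mul, coe_smul]
    abel

lemma exists_sq_eq_neg_one_and_im_eq_smul (q : ℍ[ℝ]) :
    ∃ I : ℍ[ℝ], I ^ 2 = -1 ∧ ∃ y : ℝ, q.im = y • I.im := by
  by_cases hq : q.im = 0
  · refine ⟨ofComplex Complex.I, ?_, 0, by rw [hq, zero_smul]⟩
    rw [← map_pow, Complex.I_sq, map_neg, map_one]
  · have hn : ‖q.im‖ ≠ 0 := norm_ne_zero_iff.mpr hq
    refine ⟨‖q.im‖⁻¹ • q.im, ?_, ‖q.im‖, ?_⟩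
    · rw [smul_pow, im_sq, normSq_eq_norm_mul_self, ← sq, smul_neg, ← coe_smul, smul_eq_mul,
        inv_pow, inv_mul_cancel₀ (pow_ne_zero 2 hn), coe_one]
    · rw [im_smul, im_idem, smul_smul, mul_inv_cancel₀ hn, one_smul]

end Quaternion

lemma sameSlice_iff {p q : ℍ[ℝ]} : sameSlice p q ↔
    ∃ I : ℍ[ℝ], I ^ 2 = -1 ∧ (∃ y : ℝ, p.im = y • I.im) ∧ ∃ y : ℝ, q.im = y • I.im := by
  simp only [sameSlice, exists_coe_add_smul_iff]

lemma sameSlice_comm {p q : ℍ[ℝ]} : sameSlice p q ↔ sameSlice q p :=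
  ⟨fun ⟨I, hI, hp, hq⟩ => ⟨I, hI, hq, hp⟩, fun ⟨I, hI, hq, hp⟩ => ⟨I, hI, hp, hq⟩⟩

lemma sameSlice_of_im_eq_zero {p : ℍ[ℝ]} (hp : p.im = 0) (q : ℍ[ℝ]) : sameSlice p q := by
  obtain ⟨I, hI, hq⟩ := exists_sq_eq_neg_one_and_im_eq_smul q
  exact sameSlice_iff.mpr ⟨I, hI, ⟨0, by rw [hp, zero_smul]⟩, hq⟩

lemma sameSlice_refl (q : ℍ[ℝ]) : sameSlice q q := by
  obtain ⟨I, hI, hq⟩ := exists_sq_eq_neg_one_and_im_eq_smul q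
  exact sameSlice_iff.mpr ⟨I, hI, hq, hq⟩

lemma sameSlice_trans {q p r : ℍ[ℝ]} (hp : p.im ≠ 0) (hqp : sameSlice q p)
    (hpr : sameSlice p r) : sameSlice q r := by
  obtain ⟨I, hI, hq, y, hpI⟩ := sameSlice_iff.mp hqp
  obtain ⟨J, -, ⟨b, hpJ⟩, c, hr⟩ := sameSlice_iff.mp hpr
  have hb : b ≠ 0 := by rintro rfl; exact hp (by rw [hpJ, zero_smul])
  have hJ : J.im = (b⁻¹ * y) • I.im := by
    rw [mul_smul, ← hpI, hpJ, smul_smul, inv_mul_cancel₀ hb, one_smul]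
  exact sameSlice_iff.mpr ⟨I, hI, hq, c * (b⁻¹ * y), by rw [hr, hJ, smul_smul]⟩

noncomputable def slicePoint (q : ℍ[ℝ]) : ℂ := ⟨q.re, ‖q.im‖⟩

open ComplexConjugate

lemma norm_slicePoint_sub (q p : ℍ[ℝ]) :
    ‖slicePoint q - slicePoint p‖ = √((q.re - p.re) ^ 2 + (‖q.im‖ - ‖p.im‖) ^ 2) := by
  simp only [Complex.norm_def, Complex.normSq_apply, Complex.sub_re, Complex.sub_im, slicePoint, sq]

lemma norm_slicePoint_sub_conj (q p : ℍ[ℝ]) :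
    ‖slicePoint q - conj (slicePoint p)‖ = √((q.re - p.re) ^ 2 + (‖q.im‖ + ‖p.im‖) ^ 2) := by
  simp only [Complex.norm_def, Complex.normSq_apply, Complex.sub_re, Complex.sub_im,
    Complex.conj_re, Complex.conj_im, slicePoint, sq, sub_neg_eq_add]

lemma norm_slicePoint_sub_le (q p : ℍ[ℝ]) : ‖slicePoint q - slicePoint p‖ ≤ ‖q - p‖ := by
  rw [norm_slicePoint_sub, norm_eq_sqrt_sq_re_add_sq_norm_im (q - p), re_sub, im_sub]
  rw [← sq_abs (‖q.im‖ - ‖p.im‖)]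
  gcongr
  exact abs_norm_sub_norm_le _ _

lemma norm_sub_le_norm_slicePoint_sub_conj (q p : ℍ[ℝ]) :
    ‖q - p‖ ≤ ‖slicePoint q - conj (slicePoint p)‖ := by
  rw [norm_slicePoint_sub_conj, norm_eq_sqrt_sq_re_add_sq_norm_im (q - p), re_sub, im_sub]
  gcongr
  exact norm_sub_le _ _

lemma sliceSigma_of_sameSlice {q p : ℍ[ℝ]} (h : sameSlice p q) : sliceSigma q p = ‖q - p‖ := by
  rw [sliceSigma, if_pos h]

lemma sliceSigma_of_not_sameSlice {q p : ℍ[ℝ]} (h : ¬ sameSlice p q) :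
    sliceSigma q p = ‖slicePoint q - conj (slicePoint p)‖ := by
  rw [sliceSigma, if_neg h, norm_slicePoint_sub_conj]

lemma norm_sub_le_sliceSigma (q p : ℍ[ℝ]) : ‖q - p‖ ≤ sliceSigma q p := by
  by_cases h : sameSlice p q
  · rw [sliceSigma_of_sameSlice h]
  · rw [sliceSigma_of_not_sameSlice h]
    exact norm_sub_le_norm_slicePoint_sub_conj q p

lemma sliceSigma_le_norm_slicePoint_sub_conj (q p : ℍ[ℝ]) :
    sliceSigma q p ≤ ‖slicePoint q - conj (slicePoint p)‖ := by
  by_cases h : sameSlice p q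
  · rw [sliceSigma_of_sameSlice h]
    exact norm_sub_le_norm_slicePoint_sub_conj q p
  · rw [sliceSigma_of_not_sameSlice h]

lemma norm_slicePoint_sub_conj_le_sliceSigma {q p : ℍ[ℝ]} (h : ¬ sameSlice p q ∨ p.im = 0) :
    ‖slicePoint q - conj (slicePoint p)‖ ≤ sliceSigma q p := by
  rcases h with h | hp
  · rw [sliceSigma_of_not_sameSlice h]
  · have hreal : conj (slicePoint p) = slicePoint p :=
      Complex.conj_eq_iff_im.mpr (by simp [slicePoint, hp])
    rw [hreal]
    exact (norm_slicePoint_sub_le q p).trans (norm_sub_le_sliceSigma q p)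

lemma sliceSigma_eq_zero_iff {q p : ℍ[ℝ]} : sliceSigma q p = 0 ↔ q = p := by
  constructor
  · intro h
    have := norm_sub_le_sliceSigma q p
    rw [h] at this
    exact sub_eq_zero.mp (norm_le_zero_iff.mp this)
  · rintro rfl
    rw [sliceSigma_of_sameSlice (sameSlice_refl q), sub_self, norm_zero]

lemma sliceSigma_comm (q p : ℍ[ℝ]) : sliceSigma q p = sliceSigma p q := by
  by_cases h : sameSlice p q
  · rw [sliceSigma_of_sameSlice h, sliceSigma_of_sameSlice (sameSlice_comm.mp h), norm_sub_rev]
  · rw [sliceSigma, if_neg h, sliceSigma, if_neg (mt sameSlice_comm.mp h)]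
    congr 1
    ring

lemma sliceSigma_le_add_of_not_sameSlice_or_im_eq_zero {q p : ℍ[ℝ]} (r : ℍ[ℝ])
    (h : ¬ sameSlice p q ∨ p.im = 0) : sliceSigma q r ≤ sliceSigma q p + sliceSigma p r :=
  calc sliceSigma q r
      ≤ ‖slicePoint q - conj (slicePoint r)‖ := sliceSigma_le_norm_slicePoint_sub_conj q r
    _ ≤ ‖slicePoint q - conj (slicePoint p)‖ + ‖conj (slicePoint p) - conj (slicePoint r)‖ :=
        norm_sub_le_norm_sub_add_norm_sub _ _ _
    _ = ‖slicePoint q - conj (slicePoint p)‖ + ‖slicePoint p - slicePoint r‖ := by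
        rw [← map_sub, Complex.norm_conj]
    _ ≤ sliceSigma q p + sliceSigma p r :=
        add_le_add (norm_slicePoint_sub_conj_le_sliceSigma h)
          ((norm_slicePoint_sub_le p r).trans (norm_sub_le_sliceSigma p r))

lemma sliceSigma_triangle (q p r : ℍ[ℝ]) : sliceSigma q r ≤ sliceSigma q p + sliceSigma p r := by
  by_cases hq : ¬ sameSlice p q ∨ p.im = 0
  · exact sliceSigma_le_add_of_not_sameSlice_or_im_eq_zero r hq
  by_cases hr : ¬ sameSlice p r ∨ p.im = 0
  · rw [sliceSigma_comm q r, sliceSigma_comm q p, sliceSigma_comm p r, add_comm]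
    exact sliceSigma_le_add_of_not_sameSlice_or_im_eq_zero q hr
  simp only [not_or, not_not] at hq hr
  rw [sliceSigma_of_sameSlice (sameSlice_trans hq.2 (sameSlice_comm.mp hr.1) hq.1)]
  exact (norm_sub_le_norm_sub_add_norm_sub q p r).trans
    (add_le_add (norm_sub_le_sliceSigma q p) (norm_sub_le_sliceSigma p r))

theorem sigma_is_metric :
    (∀ q p : ℍ[ℝ], sliceSigma q p = 0 ↔ q = p) ∧
    (∀ q p : ℍ[ℝ], sliceSigma q p = sliceSigma p q) ∧
    (∀ q p r : ℍ[ℝ], sliceSigma q r ≤ sliceSigma q p + sliceSigma p r) :=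
  ⟨fun _ _ => sliceSigma_eq_zero_iff, sliceSigma_comm, sliceSigma_triangle⟩
end

section
/- Let α, β ∈ ℍ and consider the quaternionic polynomial P(q) = q² - q(α + β) + αβ (with coefficients on the right). If α and β have the same real part and the same norm of imaginary part but β ≠ conj(α), then q = α is the unique root of P in ℍ. -/
open Quaternion

private lemma quat_char (a : ℍ[ℝ]) :
    a ^ 2 - ((2 * a.re : ℝ) : ℍ[ℝ]) * a + ((normSq a : ℝ) : ℍ[ℝ]) = 0 := by
  ext <;> simp [pow_two, Quaternion.normSq_def'] <;> ring

private lemma quat_star (a : ℍ[ℝ]) : star a = ((2 * a.re : ℝ) : ℍ[ℝ]) - a := by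
  ext <;> simp <;> ring

private lemma quat_normSq (a : ℍ[ℝ]) : normSq a = a.re ^ 2 + ‖a.im‖ ^ 2 := by
  simp only [pow_two]
  rw [← normSq_eq_norm_mul_self]
  simp [Quaternion.normSq_def']
  ring

/-- If `α, β` lie in the same sphere `x + y𝕊` but `β ≠ conj α`, then `α` is the unique
root of `P(q) = q² - q(α + β) + αβ`. -/
theorem unique_root_same_sphere (α β : ℍ[ℝ]) (hre : α.re = β.re)
    (him : ‖α.im‖ = ‖β.im‖) (hne : β ≠ star α) :
    ∀ q : ℍ[ℝ], q ^ 2 - q * (α + β) + α * β = 0 ↔ q = α := by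
  intro q
  constructor
  · intro hP
    by_contra hq
    set t : ℍ[ℝ] := ((2 * β.re : ℝ) : ℍ[ℝ]) with ht
    set n : ℍ[ℝ] := ((normSq β : ℝ) : ℍ[ℝ]) with hn
    have hcomm_t : ∀ x : ℍ[ℝ], t * x = x * t := fun x => Quaternion.coe_commutes _ x
    have hcomm_n : ∀ x : ℍ[ℝ], n * x = x * n := fun x => Quaternion.coe_commutes _ x
    have hns : normSq α = normSq β := by
      rw [quat_normSq, quat_normSq, hre, him]
    have hβc : β ^ 2 - t * β + n = 0 := quat_char β
    -- u := q - α ≠ 0 and q * u = u * β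
    have hu : q - α ≠ 0 := sub_ne_zero.mpr hq
    have hkey : q * (q - α) = (q - α) * β := by
      have h : q * (q - α) - (q - α) * β = q ^ 2 - q * (α + β) + α * β := by
        noncomm_ring
      rw [← sub_eq_zero, h, hP]
    -- hence q satisfies the same real quadratic as β
    have hq2 : (q ^ 2 - t * q + n) * (q - α) = 0 := by
      have h2 : q ^ 2 * (q - α) = (q - α) * β ^ 2 := by
        calc q ^ 2 * (q - α) = q * (q * (q - α)) := by noncomm_ring
          _ = q * ((q - α) * β) := by rw [hkey]
          _ = (q * (q - α)) * β := by noncomm_ring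
          _ = ((q - α) * β) * β := by rw [hkey]
          _ = (q - α) * β ^ 2 := by noncomm_ring
      calc (q ^ 2 - t * q + n) * (q - α)
          = q ^ 2 * (q - α) - t * (q * (q - α)) + n * (q - α) := by noncomm_ring
        _ = (q - α) * β ^ 2 - t * ((q - α) * β) + n * (q - α) := by rw [h2, hkey]
        _ = (q - α) * (β ^ 2 - t * β + n) := by
            simp only [hcomm_t, hcomm_n]; noncomm_ring
        _ = 0 := by rw [hβc, mul_zero]
    have hqc : q ^ 2 - t * q + n = 0 := by
      rcases mul_eq_zero.mp hq2 with h | h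
      · exact h
      · exact absurd h hu
    -- now 0 = P(q) = (q - α) * (star α - β)
    have hstar : star α = t - α := by rw [quat_star, hre]
    have hq2' : q ^ 2 = q * t - n := by
      rw [← hcomm_t q, ← sub_eq_zero, ← hqc]; noncomm_ring
    have hαα : α * α = α * t - n := by
      have h1 : α * star α = n := by rw [self_mul_star, hns]
      rw [hstar] at h1
      rw [← sub_eq_zero, ← h1]; noncomm_ring
    have hfact : (q - α) * (star α - β) = 0 := by
      rw [hstar]
      have expand : (q - α) * ((t - α) - β)
          = q * t - q * α - q * β - α * t + α * α + α * β := by noncomm_ring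
      rw [expand, hαα]
      have h2 : q * t - q * α - q * β - α * t + (α * t - n) + α * β
          = q ^ 2 - q * (α + β) + α * β := by
        rw [hq2']; noncomm_ring
      rw [h2, hP]
    rcases mul_eq_zero.mp hfact with h | h
    · exact hu h
    · exact hne (sub_eq_zero.mp h).symm
  · rintro rfl
    noncomm_ring
end

section
/- Let α, β ∈ ℍ with β ≠ conj(α) and suppose α and β do not both lie in one sphere x + y𝕊 (that is, Re α ≠ Re β or |Im α| ≠ |Im β|). Then the quaternionic polynomial P(q) = q² - q(α + β) + αβ has exactly two roots in ℍ, namely α and (β - conj(α))⁻¹ β (β - conj(α)). -/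
/-!
Since `q² - q(α+β) + αβ = q(q - α) - (q - α)β`, a root `q ≠ α` is conjugate to `β`, so it shares
`β`'s real part and norm and hence satisfies `β`'s quadratic `q² - 2 Re β q + |β|² = 0`.
Subtracting the two quadratics leaves `q(β̄ - α) = (β̄ - α)β`, which determines `q` as
`(β̄ - α) β (β̄ - α)⁻¹ = (β - ᾱ)⁻¹ β (β - ᾱ)`. Conversely this conjugate of `β` is a root, and it
differs from `α` because conjugates of `β` lie on the sphere of `β`.
-/

open Quaternion

namespace Quaternion

variable {R : Type*}

section CommRing

variable [CommRing R]

theorem re_mul_comm (a b : ℍ[R]) : (a * b).re = (b * a).re := by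
  simp only [re_mul]; ring

theorem sq_sub_two_re_mul_add_normSq (a : ℍ[R]) :
    a ^ 2 - ↑(2 * a.re) * a + ↑(normSq a) = 0 := by
  rw [← self_add_star', ← star_mul_self]; noncomm_ring

theorem sq_sub_mul_add_mul_eq_mul_sub_sub_sub_mul (q α β : ℍ[R]) :
    q ^ 2 - q * (α + β) + α * β = q * (q - α) - (q - α) * β := by
  noncomm_ring

theorem sq_sub_mul_add_mul_eq_sq_sub_two_re_mul_add_normSq_add (q α β : ℍ[R]) :
    q ^ 2 - q * (α + β) + α * β =
      (q ^ 2 - ↑(2 * β.re) * q + ↑(normSq β)) + (q * (star β - α) - (star β - α) * β) := by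
  rw [coe_commutes, ← star_add_self', ← star_mul_self]; noncomm_ring

end CommRing

section Field

variable [Field R] [LinearOrder R] [IsStrictOrderedRing R]

theorem re_mul_mul_inv {a : ℍ[R]} (ha : a ≠ 0) (b : ℍ[R]) : (a * b * a⁻¹).re = b.re := by
  rw [re_mul_comm, inv_mul_cancel_left₀ ha]

theorem normSq_mul_mul_inv {a : ℍ[R]} (ha : a ≠ 0) (b : ℍ[R]) :
    normSq (a * b * a⁻¹) = normSq b := by
  rw [map_mul, map_mul, map_inv₀, mul_right_comm, mul_inv_cancel₀ (normSq_ne_zero.2 ha), one_mul]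

theorem sq_sub_two_re_mul_add_normSq_mul_mul_inv {a : ℍ[R]} (ha : a ≠ 0) (b : ℍ[R]) :
    (a * b * a⁻¹) ^ 2 - ↑(2 * b.re) * (a * b * a⁻¹) + ↑(normSq b) = 0 := by
  simpa only [re_mul_mul_inv ha, normSq_mul_mul_inv ha] using
    sq_sub_two_re_mul_add_normSq (a * b * a⁻¹)

theorem star_inv_mul_mul_star (a b : ℍ[R]) : (star a)⁻¹ * b * star a = a * b * a⁻¹ := by
  rcases eq_or_ne a 0 with rfl | ha
  · simp
  have h : star a = a⁻¹ * ↑(normSq a) := by rw [← self_mul_star, inv_mul_cancel_left₀ ha]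
  rw [h, mul_inv_rev, inv_inv, ← mul_assoc, ← coe_commutes, ← coe_inv]
  simp only [← mul_assoc, ← coe_mul, mul_inv_cancel₀ (normSq_ne_zero.2 ha), coe_one, one_mul]

theorem sq_sub_mul_add_mul_eq_zero_iff {α β : ℍ[R]} (h : star β - α ≠ 0) (q : ℍ[R]) :
    q ^ 2 - q * (α + β) + α * β = 0 ↔
      q = α ∨ q = (star β - α) * β * (star β - α)⁻¹ := by
  constructor
  · intro hq
    refine or_iff_not_imp_left.2 fun hqα => ?_
    have hv : q - α ≠ 0 := sub_ne_zero.2 hqα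
    have hconj : q = (q - α) * β * (q - α)⁻¹ := by
      rw [eq_mul_inv_iff_mul_eq₀ hv, ← sub_eq_zero, ← sq_sub_mul_add_mul_eq_mul_sub_sub_sub_mul, hq]
    have hβ_quad : q ^ 2 - ↑(2 * β.re) * q + ↑(normSq β) = 0 := by
      rw [hconj]
      exact sq_sub_two_re_mul_add_normSq_mul_mul_inv hv β
    rw [sq_sub_mul_add_mul_eq_sq_sub_two_re_mul_add_normSq_add, hβ_quad, zero_add,
      sub_eq_zero] at hq
    exact (eq_mul_inv_iff_mul_eq₀ h).2 hq
  · rintro (rfl | rfl)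
    · noncomm_ring
    · rw [sq_sub_mul_add_mul_eq_sq_sub_two_re_mul_add_normSq_add,
        sq_sub_two_re_mul_add_normSq_mul_mul_inv h, inv_mul_cancel_right₀ h, sub_self, add_zero]

end Field

theorem normSq_eq_re_sq_add_norm_im_sq (a : ℍ) : normSq a = a.re ^ 2 + ‖a.im‖ ^ 2 := by
  rw [sq ‖a.im‖, ← normSq_eq_norm_mul_self, normSq_def', normSq_def']
  simp only [re_im, imI_im, imJ_im, imK_im]
  ring

theorem norm_im_mul_mul_inv {a : ℍ} (ha : a ≠ 0) (b : ℍ) : ‖(a * b * a⁻¹).im‖ = ‖b.im‖ := by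
  have h := normSq_mul_mul_inv ha b
  rw [normSq_eq_re_sq_add_norm_im_sq, normSq_eq_re_sq_add_norm_im_sq, re_mul_mul_inv ha,
    add_right_inj] at h
  exact (pow_left_inj₀ (norm_nonneg _) (norm_nonneg _) two_ne_zero).1 h

end Quaternion

/-- If `α, β` do not lie in a common sphere `x + y𝕊`, then `P(q) = q² - q(α+β) + αβ`
has exactly the two distinct roots `α` and `(β - conj α)⁻¹ β (β - conj α)`. -/
theorem two_roots_distinct_spheres (α β : ℍ[ℝ]) (hne : β ≠ star α)
    (hsph : α.re ≠ β.re ∨ ‖α.im‖ ≠ ‖β.im‖) :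
    {q : ℍ[ℝ] | q ^ 2 - q * (α + β) + α * β = 0} =
      {α, (β - star α)⁻¹ * β * (β - star α)} ∧
    α ≠ (β - star α)⁻¹ * β * (β - star α) := by
  have hd : star β - α ≠ 0 := by
    rw [sub_ne_zero, ← star_star α, star_injective.ne_iff]
    exact hne
  have hformula : (β - star α)⁻¹ * β * (β - star α) = (star β - α) * β * (star β - α)⁻¹ := by
    rw [← star_inv_mul_mul_star, star_sub, star_star]
  rw [hformula]
  refine ⟨Set.ext fun q => sq_sub_mul_add_mul_eq_zero_iff hd q, fun h => ?_⟩
  rcases hsph with hre | him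
  · exact hre (h ▸ re_mul_mul_inv hd β)
  · exact him (h ▸ norm_im_mul_mul_inv hd β)
end

section
/- Let I, J ∈ 𝕊 be imaginary units of the quaternions and let x, y ∈ ℝ. Then x + Jy = ((1 - JI)/2)(x + Iy) + ((1 + JI)/2)(x - Iy). More generally, for any quaternions b, c, the function f(x + Ly) = b + Lc (L ∈ 𝕊) satisfies the Representation Formula f(x + Jy) = ((1 - JI)/2) f(x + Iy) + ((1 + JI)/2) f(x - Iy). -/
open Quaternion

theorem quat_two_ne_zero : (2:ℍ[ℝ]) ≠ 0 := by
  intro h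
  have h2 : ((2:ℍ[ℝ])).re = 0 := by rw [h]; simp
  rw [show (2:ℍ[ℝ]) = 1 + 1 by norm_num] at h2
  simp at h2

theorem quat_key (I J : ℍ[ℝ]) (hI : I ^ 2 = -1) (b c : ℍ[ℝ]) :
      b + J * c = ((1 - J * I) / 2) * (b + I * c) + ((1 + J * I) / 2) * (b - I * c) := by
  have h2 := quat_two_ne_zero
  apply mul_left_cancel₀ h2
  have hd : ∀ a u : ℍ[ℝ], 2 * (a / 2 * u) = a * u := by
    intro a u
    rw [div_eq_mul_inv, ((Commute.ofNat_right a 2).inv_right₀).eq, ← mul_assoc,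
      ← mul_assoc, mul_inv_cancel₀ h2, one_mul]
  rw [mul_add (2:ℍ[ℝ]) ((1 - J * I) / 2 * (b + I * c)), hd, hd]
  have hIc : ∀ u : ℍ[ℝ], I * (I * u) = -u := by
    intro u; rw [← mul_assoc, ← sq, hI]; noncomm_ring
  have expand : (1 - J * I) * (b + I * c) + (1 + J * I) * (b - I * c)
      = 2 • b + -2 • (J * (I * (I * c))) := by noncomm_ring
  rw [expand, hIc]
  noncomm_ring

/-- The Representation Formula for affine functions of the imaginary unit. -/
theorem representation_formula (I J : ℍ[ℝ]) (hI : I ^ 2 = -1) (hJ : J ^ 2 = -1) :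
    (∀ x y : ℝ,
      (x : ℍ[ℝ]) + y • J =
        ((1 - J * I) / 2) * ((x : ℍ[ℝ]) + y • I) + ((1 + J * I) / 2) * ((x : ℍ[ℝ]) - y • I)) ∧
    (∀ b c : ℍ[ℝ],
      b + J * c = ((1 - J * I) / 2) * (b + I * c) + ((1 + J * I) / 2) * (b - I * c)) := by
  refine ⟨fun x y => ?_, quat_key I J hI⟩
  have := quat_key I J hI (x : ℍ[ℝ]) ((y : ℝ) • (1 : ℍ[ℝ]))
  have hs : ∀ q : ℍ[ℝ], q * ((y:ℝ) • (1:ℍ[ℝ])) = y • q := by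
    intro q; rw [mul_smul_comm, mul_one]
  rw [hs, hs] at this
  convert this using 3 <;> rw [hs]
end

section
/- Fix a quaternion p in the slice ℝ + Iℝ with p ∉ ℝ, and a quaternion q = x + Jy with J ∈ 𝕊, J ≠ ±I, y ≠ 0. Set z = x + Iy, z̄ = x - Iy, and assume |z - p| < |z̄ - p|. Then lim_{n→∞} |((1 - JI)/2)(z - p)ⁿ + ((1 + JI)/2)(z̄ - p)ⁿ|^{1/n} = |z̄ - p|. -/
open Quaternion

/-- The limit `lim |(q-p)^{*n}|^{1/n} = σ(q,p)` in the generic case. -/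
theorem star_power_limit (I J : ℍ[ℝ]) (hI : I ^ 2 = -1) (hJ : J ^ 2 = -1)
    (hJI : J ≠ I) (hJI' : J ≠ -I)
    (px py x y : ℝ) (hpy : py ≠ 0) (hy : y ≠ 0) (p z zb : ℍ[ℝ])
    (hp : p = (px : ℍ[ℝ]) + py • I)
    (hz : z = (x : ℍ[ℝ]) + y • I) (hzb : zb = (x : ℍ[ℝ]) - y • I)
    (hlt : ‖z - p‖ < ‖zb - p‖) :
    Filter.Tendsto
      (fun n : ℕ =>
        ‖((1 - J * I) / 2) * (z - p) ^ n + ((1 + J * I) / 2) * (zb - p) ^ n‖ ^ (1 / (n : ℝ)))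
      Filter.atTop (nhds ‖zb - p‖) := by
  set a := z - p with haa
  set b := zb - p with hbb
  set c : ℍ[ℝ] := (1 - J * I) / 2 with hc
  set d : ℍ[ℝ] := (1 + J * I) / 2 with hdd
  have hIne : (I : ℍ[ℝ]) ≠ 0 := by
    intro h; rw [h] at hI; norm_num at hI
  have hdne : d ≠ 0 := by
    intro h
    apply hJI
    have h2 : (1 + J * I : ℍ[ℝ]) = 0 :=
      (div_eq_zero_iff.mp h).resolve_right (by
        have : CharZero ℍ[ℝ] :=
          charZero_of_injective_algebraMap (R := ℝ) Quaternion.coe_injective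
        exact two_ne_zero)
    have h3 : J * I = I * I := by
      have : J * I = -1 := eq_neg_of_add_eq_zero_right h2
      rw [this, ← sq, hI]
    exact mul_right_cancel₀ hIne h3
  have hb : (0:ℝ) < ‖b‖ := lt_of_le_of_lt (norm_nonneg a) hlt
  set r : ℝ := ‖a‖ / ‖b‖ with hrr
  have ha : ‖a‖ = r * ‖b‖ := (div_mul_cancel₀ _ hb.ne').symm
  have hr1 : r < 1 := (div_lt_one hb).mpr hlt
  have hr0 : (0:ℝ) ≤ r := div_nonneg (norm_nonneg _) hb.le
  have hd : (0:ℝ) < ‖d‖ := norm_pos_iff.mpr hdne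
  have htend : Filter.Tendsto (fun n : ℕ => ‖c‖ * r ^ n) Filter.atTop (nhds 0) := by
    simpa using (tendsto_pow_atTop_nhds_zero_of_lt_one hr0 hr1).const_mul ‖c‖
  have hexp : Filter.Tendsto (fun n : ℕ => 1 / (n : ℝ)) Filter.atTop (nhds 0) :=
    tendsto_one_div_atTop_nhds_zero_nat
  have hlowt : Filter.Tendsto (fun n : ℕ => ‖b‖ * (‖d‖ - ‖c‖ * r ^ n) ^ (1 / (n:ℝ)))
      Filter.atTop (nhds ‖b‖) := by
    have h1 : Filter.Tendsto (fun n : ℕ => ‖d‖ - ‖c‖ * r ^ n) Filter.atTop (nhds ‖d‖) := by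
      simpa using tendsto_const_nhds.sub htend
    have := (h1.rpow hexp (Or.inl hd.ne')).const_mul ‖b‖
    simpa using this
  have hhight : Filter.Tendsto (fun n : ℕ => ‖b‖ * (‖d‖ + ‖c‖ * r ^ n) ^ (1 / (n:ℝ)))
      Filter.atTop (nhds ‖b‖) := by
    have h1 : Filter.Tendsto (fun n : ℕ => ‖d‖ + ‖c‖ * r ^ n) Filter.atTop (nhds ‖d‖) := by
      simpa using tendsto_const_nhds.add htend
    have := (h1.rpow hexp (Or.inl hd.ne')).const_mul ‖b‖
    simpa using this
  have hev : ∀ᶠ n : ℕ in Filter.atTop, ‖c‖ * r ^ n < ‖d‖ ∧ 1 ≤ n := by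
    filter_upwards [htend.eventually_lt_const hd, Filter.eventually_ge_atTop 1] with n h1 h2
    exact ⟨h1, h2⟩
  have hbn : ∀ n : ℕ, 1 ≤ n → (‖b‖ ^ n : ℝ) ^ (1 / (n:ℝ)) = ‖b‖ := by
    intro n hn
    have hn0 : (n:ℝ) ≠ 0 := Nat.cast_ne_zero.mpr (by omega)
    rw [← Real.rpow_natCast ‖b‖ n, ← Real.rpow_mul hb.le, mul_one_div_cancel hn0,
      Real.rpow_one]
  have hexp0 : ∀ n : ℕ, (0:ℝ) ≤ 1 / (n:ℝ) := fun n => by positivity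
  have hlow : ∀ᶠ n : ℕ in Filter.atTop,
      ‖b‖ * (‖d‖ - ‖c‖ * r ^ n) ^ (1 / (n:ℝ)) ≤ ‖c * a ^ n + d * b ^ n‖ ^ (1 / (n:ℝ)) := by
    filter_upwards [hev] with n hn
    obtain ⟨h1, h2⟩ := hn
    have hin : (0:ℝ) ≤ ‖d‖ - ‖c‖ * r ^ n := by linarith
    have key : ‖b‖ * (‖d‖ - ‖c‖ * r ^ n) ^ (1 / (n:ℝ))
        = (‖b‖ ^ n * (‖d‖ - ‖c‖ * r ^ n)) ^ (1 / (n:ℝ)) := by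
      rw [Real.mul_rpow (by positivity) hin, hbn n h2]
    rw [key]
    apply Real.rpow_le_rpow (by positivity) _ (hexp0 n)
    have heq : ‖b‖ ^ n * (‖d‖ - ‖c‖ * r ^ n) = ‖d * b ^ n‖ - ‖c * a ^ n‖ := by
      rw [norm_mul, norm_mul, norm_pow, norm_pow, ha, mul_pow]; ring
    rw [heq]
    have h3 : ‖d * b ^ n‖ ≤ ‖c * a ^ n + d * b ^ n‖ + ‖c * a ^ n‖ := by
      calc ‖d * b ^ n‖ = ‖(c * a ^ n + d * b ^ n) - c * a ^ n‖ := by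
            exact (congrArg norm (add_sub_cancel_left _ _)).symm
        _ ≤ ‖c * a ^ n + d * b ^ n‖ + ‖c * a ^ n‖ := norm_sub_le _ _
    linarith
  have hhigh : ∀ᶠ n : ℕ in Filter.atTop,
      ‖c * a ^ n + d * b ^ n‖ ^ (1 / (n:ℝ)) ≤ ‖b‖ * (‖d‖ + ‖c‖ * r ^ n) ^ (1 / (n:ℝ)) := by
    filter_upwards [hev] with n hn
    obtain ⟨h1, h2⟩ := hn
    have key : ‖b‖ * (‖d‖ + ‖c‖ * r ^ n) ^ (1 / (n:ℝ))
        = (‖b‖ ^ n * (‖d‖ + ‖c‖ * r ^ n)) ^ (1 / (n:ℝ)) := by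
      rw [Real.mul_rpow (by positivity) (by positivity), hbn n h2]
    rw [key]
    apply Real.rpow_le_rpow (norm_nonneg _) _ (hexp0 n)
    have heq : ‖b‖ ^ n * (‖d‖ + ‖c‖ * r ^ n) = ‖c * a ^ n‖ + ‖d * b ^ n‖ := by
      rw [norm_mul, norm_mul, norm_pow, norm_pow, ha, mul_pow]; ring
    rw [heq]
    exact norm_add_le _ _
  exact tendsto_of_tendsto_of_tendsto_of_le_of_le' hlowt hhight hlow hhigh
end
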